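/- arXiv:2012.04553 — 2 statements merged into one kernel-verified Lean document; each statement's English description precedes it below -/
import Mathlib

section
/- Let V and W be finite types, let p be a simple graph on V, and let G be a simple graph on W. Then the set of vertex-induced matches of p in G equals the set of edge-induced matches of p in G minus the union, over all simple graphs q on V that are strict supergraphs of p, of the sets { m ∘ f | m is a vertex-induced match of q in G and f is a subgraph isomorphism from p to q }. (Corollary of the Match Conversion Theorem.) -/
/-- The set of edge-induced matches of pattern `p` in data graph `G`:
injective maps preserving adjacency. -/
def EdgeInduced {V W : Type*} (p : SimpleGraph V) (G : SimpleGraph W) : Set (V → W) :=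
  {m | Function.Injective m ∧ ∀ u v, p.Adj u v → G.Adj (m u) (m v)}

/-- The set of vertex-induced matches of pattern `p` in data graph `G`:
injective maps reflecting adjacency exactly. -/
def VertexInduced {V W : Type*} (p : SimpleGraph V) (G : SimpleGraph W) : Set (V → W) :=
  {m | Function.Injective m ∧ ∀ u v, p.Adj u v ↔ G.Adj (m u) (m v)}

/-- The set `Φ(p,q)` of subgraph isomorphisms from `p` to `q`:
permutations of the vertex set mapping edges of `p` to edges of `q`. -/
def SubIso {V : Type*} (p q : SimpleGraph V) : Set (Equiv.Perm V) :=
  {f | ∀ u v, p.Adj u v → q.Adj (f u) (f v)}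

/-- `M ∘ F = { m ∘ f | m ∈ M, f ∈ F }`. -/
def CompSet {V W : Type*} (M : Set (V → W)) (F : Set (Equiv.Perm V)) : Set (V → W) :=
  {x | ∃ m ∈ M, ∃ f ∈ F, x = m ∘ f}

/-- The set `Aut(q)` of automorphisms of `q`. -/
def AutSet {V : Type*} (q : SimpleGraph V) : Set (Equiv.Perm V) :=
  {g | ∀ u v, q.Adj u v ↔ q.Adj (g u) (g v)}

/-! Matches are classified by the pulled-back graph `G.comap m`: `m` is edge-induced for `p`
iff `p ≤ G.comap m` and vertex-induced iff `p = G.comap m`. An edge-induced match that is not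
vertex-induced is thus `m ∘ 1` for the strict supergraph `G.comap m`. Conversely, a vertex-induced
match `m' ∘ f` of `p` with `m'` vertex-induced for `q` forces `p = q.comap f ≃g q`, and on a finite
vertex set an isomorphic copy of `q` has as many edges as `q`, so it is not strictly below `q`. -/

open SimpleGraph Function

section

variable {V W : Type*} {p q : SimpleGraph V} {G : SimpleGraph W} {m : V → W}

theorem mem_edgeInduced_iff : m ∈ EdgeInduced p G ↔ Injective m ∧ p ≤ G.comap m :=
  and_congr_right fun _ => ⟨fun h _ _ => h _ _, fun h _ _ => @h _ _⟩

theorem mem_vertexInduced_iff : m ∈ VertexInduced p G ↔ Injective m ∧ G.comap m = p := by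
  refine and_congr_right fun _ => ⟨fun h => ?_, fun h u v => ?_⟩
  · ext u v
    exact (h u v).symm
  · rw [← h, comap_adj]

theorem VertexInduced.subset_edgeInduced : VertexInduced p G ⊆ EdgeInduced p G := fun _ hm => by
  rw [mem_vertexInduced_iff] at hm
  exact mem_edgeInduced_iff.2 ⟨hm.1, hm.2.ge⟩

theorem SimpleGraph.not_comap_perm_lt [Finite V] (f : Equiv.Perm V) : ¬q.comap f < q := by
  classical
  have := Fintype.ofFinite V
  intro hlt
  exact (Finset.card_lt_card (edgeFinset_ssubset_edgeFinset.2 hlt)).ne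
    (Iso.comap f q).card_edgeFinset_eq

theorem notMem_compSet_of_lt [Finite V] (hpq : p < q) (hm : m ∈ VertexInduced p G) :
    m ∉ CompSet (VertexInduced q G) (SubIso p q) := by
  rintro ⟨m', hm', f, -, rfl⟩
  rw [mem_vertexInduced_iff] at hm hm'
  rw [← hm.2, ← comap_comap, hm'.2] at hpq
  exact not_comap_perm_lt f hpq

theorem mem_compSet_comap (hm : m ∈ EdgeInduced p G) :
    m ∈ CompSet (VertexInduced (G.comap m) G) (SubIso p (G.comap m)) :=
  ⟨m, mem_vertexInduced_iff.2 ⟨hm.1, rfl⟩, 1, hm.2, rfl⟩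

end

theorem match_conversion_vertex_induced_general {V W : Type*} [Fintype V]
    (p : SimpleGraph V) (G : SimpleGraph W) :
    VertexInduced p G =
      EdgeInduced p G \
        (⋃ q ∈ {q : SimpleGraph V | p < q}, CompSet (VertexInduced q G) (SubIso p q)) := by
  ext m
  simp only [Set.mem_sdiff, Set.mem_iUnion₂, Set.mem_ofPred_eq, not_exists]
  constructor
  · exact fun hm => ⟨VertexInduced.subset_edgeInduced hm, fun q hpq => notMem_compSet_of_lt hpq hm⟩
  · rintro ⟨hm, hnot⟩
    obtain heq | hlt := (mem_edgeInduced_iff.1 hm).2.eq_or_lt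
    · exact mem_vertexInduced_iff.2 ⟨hm.1, heq.symm⟩
    · exact absurd (mem_compSet_comap hm) (hnot _ hlt)

/-- Corollary of the Match Conversion Theorem: the vertex-induced matches of `p` in `G`
are the edge-induced matches minus the permuted vertex-induced matches of all
strict supergraphs of `p`. -/
theorem match_conversion_vertex_induced {V W : Type*} [Fintype V] [Fintype W]
    (p : SimpleGraph V) (G : SimpleGraph W) :
    VertexInduced p G =
      EdgeInduced p G \
        (⋃ q ∈ {q : SimpleGraph V | p < q}, CompSet (VertexInduced q G) (SubIso p q)) :=
  match_conversion_vertex_induced_general p G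
end

section
/- Let V and W be finite types, let p and q be simple graphs on V, let G be a simple graph on W, let A be a commutative additive monoid, and let λ be any function from maps V → W to A. Then |Aut(q)| • (Σ_{x ∈ M_V(q,G) ∘ Φ(p,q)} λ(x)) = Σ_{f ∈ Φ(p,q)} Σ_{m ∈ M_V(q,G)} λ(m ∘ f), where M_V(q,G) ∘ Φ(p,q) denotes the set { m ∘ f | m ∈ M_V(q,G), f ∈ Φ(p,q) } and • denotes natural-number scalar multiplication in A. (Corrected form of the identity a(M(q^V) ∘ φ(p,q)) = ⊕_{f ∈ φ(p,q)} a(M(q^V)) ∘* f used in the Aggregation Conversion Theorem.) -/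
/-!
Every fibre of `(f, m) ↦ m ∘ f` on `Φ(p,q) × M_V(q,G)` is a copy of `Aut(q)`: if `m ∘ f = m' ∘ f'`
then `m' = m ∘ g` with `g = f ∘ f'⁻¹`, and a permutation relating two vertex-induced matches of `q`
is an automorphism of `q`. Summing `λ` fibrewise gives the identity.
-/

open Set

section FiniteSums

variable {α β M : Type*} [AddCommMonoid M]

theorem finsum_mem_product {s : Set α} {t : Set β} (hs : s.Finite) (ht : t.Finite)
    (f : α × β → M) : ∑ᶠ x ∈ s ×ˢ t, f x = ∑ᶠ a ∈ s, ∑ᶠ b ∈ t, f (a, b) := by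
  lift s to Finset α using hs
  lift t to Finset β using ht
  simp only [← Finset.coe_product, finsum_mem_coe_finset, Finset.sum_product]

theorem finsum_mem_comp_eq_nsmul_of_ncard_fiber {s : Set α} (hs : s.Finite) (π : α → β)
    {n : ℕ} (hn : ∀ y ∈ π '' s, {x ∈ s | π x = y}.ncard = n) (g : β → M) :
    ∑ᶠ x ∈ s, g (π x) = n • ∑ᶠ y ∈ π '' s, g y := by
  classical
  lift s to Finset α using hs
  rw [← Finset.coe_image, finsum_mem_coe_finset, finsum_mem_coe_finset, Finset.sum_comp,
    Finset.smul_sum]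
  refine Finset.sum_congr rfl fun y hy => ?_
  rw [← hn y (by simpa using hy), ← Set.ncard_coe_finset, Finset.coe_filter]
  rfl

end FiniteSums

section Matches

variable {V W : Type*} {p q : SimpleGraph V} {G : SimpleGraph W}

theorem inv_mem_autSet {g : Equiv.Perm V} (hg : g ∈ AutSet q) : g⁻¹ ∈ AutSet q := fun u v => by
  simpa using (hg (g⁻¹ u) (g⁻¹ v)).symm

theorem mul_mem_subIso {g f : Equiv.Perm V} (hg : g ∈ AutSet q) (hf : f ∈ SubIso p q) :
    g * f ∈ SubIso p q := fun u v huv => (hg _ _).mp (hf u v huv)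

theorem comp_mem_vertexInduced {m : V → W} {g : Equiv.Perm V} (hm : m ∈ VertexInduced q G)
    (hg : g ∈ AutSet q) : m ∘ ⇑g ∈ VertexInduced q G :=
  ⟨hm.1.comp g.injective, fun u v => (hg u v).trans (hm.2 (g u) (g v))⟩

theorem mem_autSet_of_comp_mem_vertexInduced {m : V → W} {g : Equiv.Perm V}
    (hm : m ∈ VertexInduced q G) (hmg : m ∘ ⇑g ∈ VertexInduced q G) : g ∈ AutSet q :=
  fun u v => (hmg.2 u v).trans (hm.2 (g u) (g v)).symm

theorem compSet_eq_image (M : Set (V → W)) (F : Set (Equiv.Perm V)) :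
    CompSet M F = (fun x : Equiv.Perm V × (V → W) => x.2 ∘ ⇑x.1) '' (F ×ˢ M) := by
  ext x
  simp only [CompSet, mem_ofPred_eq, mem_image, mem_prod, Prod.exists]
  grind

theorem compFiber_eq_image_autSet {m₀ : V → W} {f₀ : Equiv.Perm V}
    (hm₀ : m₀ ∈ VertexInduced q G) (hf₀ : f₀ ∈ SubIso p q) :
    {x ∈ SubIso p q ×ˢ VertexInduced q G | x.2 ∘ ⇑x.1 = m₀ ∘ ⇑f₀} =
      (fun g : Equiv.Perm V => (g⁻¹ * f₀, m₀ ∘ ⇑g)) '' AutSet q := by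
  ext ⟨f, m⟩
  simp only [mem_ofPred_eq, mem_prod, mem_image, Prod.mk.injEq]
  constructor
  · rintro ⟨⟨hf, hm⟩, hmf⟩
    have hm₀g : m₀ ∘ ⇑(f₀ * f⁻¹) = m := by
      rw [Equiv.Perm.coe_mul, ← Function.comp_assoc, ← hmf]
      ext; simp
    refine ⟨f₀ * f⁻¹, mem_autSet_of_comp_mem_vertexInduced hm₀ (hm₀g ▸ hm), by group, hm₀g⟩
  · rintro ⟨g, hg, rfl, rfl⟩
    refine ⟨⟨mul_mem_subIso (inv_mem_autSet hg) hf₀, comp_mem_vertexInduced hm₀ hg⟩, ?_⟩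
    ext; simp

theorem ncard_compFiber {m₀ : V → W} {f₀ : Equiv.Perm V}
    (hm₀ : m₀ ∈ VertexInduced q G) (hf₀ : f₀ ∈ SubIso p q) :
    {x ∈ SubIso p q ×ˢ VertexInduced q G | x.2 ∘ ⇑x.1 = m₀ ∘ ⇑f₀}.ncard = (AutSet q).ncard := by
  rw [compFiber_eq_image_autSet hm₀ hf₀]
  exact ncard_image_of_injective _ fun g₁ g₂ h =>
    inv_injective (mul_right_cancel (congrArg Prod.fst h))

end Matches

/-- Corrected aggregation identity over the composed match set:
`|Aut(q)| • a(M_V(q,G) ∘ Φ(p,q)) = ⊕_{f ∈ Φ(p,q)} ⊕_{m ∈ M_V(q,G)} lam (m ∘ f)`. -/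
theorem aggregation_compSet {V W : Type*} [Fintype V] [Fintype W]
    (p q : SimpleGraph V) (G : SimpleGraph W)
    {A : Type*} [AddCommMonoid A] (lam : (V → W) → A) :
    (AutSet q).ncard • (∑ᶠ x ∈ CompSet (VertexInduced q G) (SubIso p q), lam x) =
      ∑ᶠ f ∈ SubIso p q, ∑ᶠ m ∈ VertexInduced q G, lam (m ∘ f) := by
  have hΦ : (SubIso p q).Finite := toFinite _
  have hM : (VertexInduced q G).Finite := toFinite _
  rw [← finsum_mem_product hΦ hM fun x => lam (x.2 ∘ ⇑x.1), compSet_eq_image,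
    finsum_mem_comp_eq_nsmul_of_ncard_fiber (hΦ.prod hM) _ ?_ lam]
  rintro _ ⟨⟨f₀, m₀⟩, ⟨hf₀, hm₀⟩, rfl⟩
  exact ncard_compFiber hm₀ hf₀
end
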